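/- Let L be the generator of an irreducible continuous-time Markov chain on a finite state space Ω reversible with respect to π, and let c_LS be its log-Sobolev constant: c_LS = inf{E(h,h)/Ent_π(h²)} over nonconstant h ≥ 0, where Ent_π(f) = E_π[f log(f/E_π f)]. Then c_LS ≤ min_x (−L(x,x))/log(1/π(x)). -/

import Mathlib

/-!
Test the log-Sobolev quotient on the indicator `h = 1_{x}`. Since `h² = h`, reversibility and
the vanishing row sums of `L` give `E(h,h) = -π(x) L(x,x)`, while `Ent_π(h²) = π(x) log(1/π(x))`;
the factor `π(x)` cancels in the quotient.
-/

noncomputable section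

variable {Ω : Type*} [Fintype Ω] [DecidableEq Ω]

/-- Dirichlet form of a generator `L`: `E(h,h) = (1/2) Σ_{x,y} π(x) L(x,y) (h(x) − h(y))²`. -/
def dirFormL (π : Ω → ℝ) (L : Matrix Ω Ω ℝ) (h : Ω → ℝ) : ℝ :=
  (1 / 2) * ∑ x, ∑ y, π x * L x y * (h x - h y) ^ 2

/-- Entropy `Ent_π(f) = E_π[f log(f/E_π f)]` (with the convention `0·log 0 = 0`, which holds
automatically since `Real.log 0 = 0`). -/
def entPi (π : Ω → ℝ) (f : Ω → ℝ) : ℝ :=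
  ∑ x, π x * f x * Real.log (f x / ∑ y, π y * f y)

/-- The log-Sobolev constant `c_LS = inf{E(h,h)/Ent_π(h²) : h² nonconstant}`. -/
def cLS (π : Ω → ℝ) (L : Matrix Ω Ω ℝ) : ℝ :=
  sInf {r : ℝ | ∃ h : Ω → ℝ, (¬ ∀ x y, h x ^ 2 = h y ^ 2) ∧
    r = dirFormL π L h / entPi π (fun x => h x ^ 2)}

section

open Finset InformationTheory

variable {α : Type*} [Fintype α]

lemma entPi_nonneg (π : α → ℝ) (hπ : ∀ x, 0 ≤ π x) (hπsum : ∑ x, π x = 1)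
    (f : α → ℝ) (hf : ∀ x, 0 ≤ f x) : 0 ≤ entPi π f := by
  set m := ∑ y, π y * f y with hm
  have hm0 : 0 ≤ m := sum_nonneg fun y _ => mul_nonneg (hπ y) (hf y)
  rcases hm0.eq_or_lt with hm_zero | hmpos
  · -- `f x / 0 = 0` and `log 0 = 0`, so every term vanishes.
    simp [entPi, ← hm, ← hm_zero]
  -- `f log (f/m) - (f - m) = m · klFun (f/m) ≥ 0`, and the terms `π (f - m)` sum to zero.
  have hterm : ∀ x, π x * (f x - m) ≤ π x * f x * Real.log (f x / m) := by
    intro x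
    have hkl : 0 ≤ m * klFun (f x / m) :=
      mul_nonneg hmpos.le (klFun_nonneg (div_nonneg (hf x) hmpos.le))
    have hfx : m * klFun (f x / m) = f x * Real.log (f x / m) - (f x - m) := by
      rw [klFun]; field_simp; ring
    rw [mul_assoc]
    exact mul_le_mul_of_nonneg_left (by linarith) (hπ x)
  calc (0 : ℝ) = ∑ x, π x * (f x - m) := by
        simp only [mul_sub, sum_sub_distrib, ← sum_mul, hπsum, ← hm]; ring
    _ ≤ entPi π f := sum_le_sum fun x _ => hterm x

lemma dirFormL_nonneg (π : α → ℝ) (hπ : ∀ x, 0 ≤ π x) (L : Matrix α α ℝ)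
    (hLoff : ∀ x y, x ≠ y → 0 ≤ L x y) (h : α → ℝ) : 0 ≤ dirFormL π L h := by
  refine mul_nonneg (by norm_num) (sum_nonneg fun a _ => sum_nonneg fun b _ => ?_)
  rcases eq_or_ne a b with rfl | hab
  · simp
  · exact mul_nonneg (mul_nonneg (hπ a) (hLoff a b hab)) (sq_nonneg _)

lemma cLS_le_dirFormL_div_entPi (π : α → ℝ) (hπ : ∀ x, 0 ≤ π x) (hπsum : ∑ x, π x = 1)
    (L : Matrix α α ℝ) (hLoff : ∀ x y, x ≠ y → 0 ≤ L x y) (h : α → ℝ)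
    (hh : ¬ ∀ x y, h x ^ 2 = h y ^ 2) :
    cLS π L ≤ dirFormL π L h / entPi π (fun x => h x ^ 2) := by
  refine csInf_le ⟨0, ?_⟩ ⟨h, hh, rfl⟩
  rintro r ⟨g, -, rfl⟩
  exact div_nonneg (dirFormL_nonneg π hπ L hLoff g)
    (entPi_nonneg π hπ hπsum _ fun x => sq_nonneg (g x))

lemma dirFormL_eq_neg_sum (π : α → ℝ) (L : Matrix α α ℝ) (hLrow : ∀ x, ∑ y, L x y = 0)
    (hrev : ∀ x y, π x * L x y = π y * L y x) (h : α → ℝ) :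
    dirFormL π L h = -∑ x, ∑ y, π x * L x y * h x * h y := by
  have hdiag : ∑ x, ∑ y, π x * L x y * h x ^ 2 = 0 := by
    simp [← sum_mul, ← mul_sum, hLrow]
  have hswap : ∑ x, ∑ y, π x * L x y * h y ^ 2 = ∑ x, ∑ y, π x * L x y * h x ^ 2 := by
    rw [sum_comm]; simp only [hrev]
  have hexpand : ∀ x y, π x * L x y * (h x - h y) ^ 2 =
      π x * L x y * h x ^ 2 + π x * L x y * h y ^ 2 - 2 * (π x * L x y * h x * h y) := by
    intro x y; ring
  simp only [dirFormL, hexpand, sum_sub_distrib, sum_add_distrib, ← mul_sum, hswap, hdiag]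
  ring

variable [DecidableEq α]

lemma dirFormL_single (π : α → ℝ) (L : Matrix α α ℝ) (hLrow : ∀ x, ∑ y, L x y = 0)
    (hrev : ∀ x y, π x * L x y = π y * L y x) (x : α) :
    dirFormL π L (Pi.single x 1) = π x * -L x x := by
  rw [dirFormL_eq_neg_sum π L hLrow hrev]
  simp [Pi.single_apply]

lemma entPi_sq_single (π : α → ℝ) (x : α) :
    entPi π (fun a => (Pi.single x 1 : α → ℝ) a ^ 2) = π x * Real.log (1 / π x) := by
  simp [entPi, Pi.single_apply]

end

theorem stmt10_general (hcard : 1 < Fintype.card Ω)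
    (π : Ω → ℝ) (hπpos : ∀ x, 0 < π x) (hπsum : ∑ x, π x = 1)
    (L : Matrix Ω Ω ℝ)
    (hLoff : ∀ x y, x ≠ y → 0 ≤ L x y) (hLrow : ∀ x, ∑ y, L x y = 0)
    (hrev : ∀ x y, π x * L x y = π y * L y x) :
    ∀ x : Ω, cLS π L ≤ (-(L x x)) / Real.log (1 / π x) := by
  intro x
  obtain ⟨y, hyx⟩ := Fintype.exists_ne_of_one_lt_card hcard x
  have hnonconst : ¬ ∀ a b, (Pi.single x 1 : Ω → ℝ) a ^ 2 = (Pi.single x 1 : Ω → ℝ) b ^ 2 :=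
    fun h => by simpa [hyx] using h x y
  calc cLS π L
      ≤ dirFormL π L (Pi.single x 1) / entPi π (fun a => (Pi.single x 1 : Ω → ℝ) a ^ 2) :=
        cLS_le_dirFormL_div_entPi π (fun a => (hπpos a).le) hπsum L hLoff _ hnonconst
    _ = -L x x / Real.log (1 / π x) := by
        rw [dirFormL_single π L hLrow hrev, entPi_sq_single, mul_div_mul_left _ _ (hπpos x).ne']

/-- equation (7.2). For an irreducible generator `L` reversible w.r.t. `π`
on a finite state space with at least two points,
`c_LS ≤ min_x (−L(x,x)) / log(1/π(x))`. -/
theorem stmt10 (hcard : 1 < Fintype.card Ω)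
    (π : Ω → ℝ) (hπpos : ∀ x, 0 < π x) (hπsum : ∑ x, π x = 1)
    (L : Matrix Ω Ω ℝ)
    (hLoff : ∀ x y, x ≠ y → 0 ≤ L x y) (hLrow : ∀ x, ∑ y, L x y = 0)
    (hrev : ∀ x y, π x * L x y = π y * L y x)
    (hirr : ∀ x y : Ω, ∃ n : ℕ,
      0 < ((Matrix.of fun x y => if x = y then 0 else L x y) ^ n) x y) :
    ∀ x : Ω, cLS π L ≤ (-(L x x)) / Real.log (1 / π x) :=
  stmt10_general hcard π hπpos hπsum L hLoff hLrow hrev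

end
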